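/- arXiv:1708.04541 — 3 statements merged into one kernel-verified Lean document; each statement's English description precedes it below -/
import Mathlib

section
/- Let f be a path function on 𝒫 that is INSP and suppose P = (v_0, v_1, ..., v_k, v*_l, ..., v*_1, v*_0) is a shortest path such that each truncation P_i = (v_0, ..., v_k, v*_l, ..., v*_i) for i = 1, ..., l is also a shortest path. Then the vertices v*_0, v*_1, ..., v*_l are pairwise distinct. -/
/-- `P` ends at vertex `v`. Paths are modeled as nonempty lists of vertices. -/
def Ends {V : Type*} (P : List V) (v : V) : Prop := P.getLast? = some v

/-- Every path of the system starts at the source `s`. -/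
def SourcedAt {V : Type*} (PS : Set (List V)) (s : V) : Prop :=
  ∀ P ∈ PS, P.head? = some s

/-- The path system is closed under taking (nonempty) prefixes. -/
def PrefixClosed {V : Type*} (PS : Set (List V)) : Prop :=
  ∀ P ∈ PS, ∀ P', P' <+: P → P' ≠ [] → P' ∈ PS

/-- `f` is non-decreasing: prefixes have smaller or equal value. -/
def NonDecreasingPF {V : Type*} (PS : Set (List V)) (f : List V → ℝ) : Prop :=
  ∀ P ∈ PS, ∀ P' ∈ PS, P' <+: P → f P' ≤ f P

/-- `f` is increasing: strict prefixes have strictly smaller value. -/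
def IncreasingPF {V : Type*} (PS : Set (List V)) (f : List V → ℝ) : Prop :=
  ∀ P ∈ PS, ∀ P' ∈ PS, P' <+: P → P' ≠ P → f P' < f P

/-- `f` has no negative circles: appending a circle at the terminal vertex
does not decrease the value. -/
def NoNegCircles {V : Type*} (PS : Set (List V)) (f : List V → ℝ) : Prop :=
  ∀ P ∈ PS, ∀ C : List V, P ++ C ∈ PS → C ≠ [] →
    ∀ v, Ends P v → Ends C v → f P ≤ f (P ++ C)

/-- `f` has no non-positive circles: appending a circle at the terminal vertex
strictly increases the value. -/
def NoNonposCircles {V : Type*} (PS : Set (List V)) (f : List V → ℝ) : Prop :=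
  ∀ P ∈ PS, ∀ C : List V, P ++ C ∈ PS → C ≠ [] →
    ∀ v, Ends P v → Ends C v → f P < f (P ++ C)

/-- `P` is a shortest path: `f P = m_f (t P)`, i.e. `f P` is minimal among
the values of paths of the system with the same terminal vertex. -/
def Shortest {V : Type*} (PS : Set (List V)) (f : List V → ℝ) (P : List V) : Prop :=
  P ∈ PS ∧ ∀ Q ∈ PS, Q.getLast? = P.getLast? → f P ≤ f Q

/-- non-decreasing in shortest path. -/
def NDSP {V : Type*} (PS : Set (List V)) (f : List V → ℝ) : Prop :=
  ∀ P, Shortest PS f P → ∀ x, P ++ [x] ∈ PS → f P ≤ f (P ++ [x])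

/-- increasing in shortest path. -/
def INSP {V : Type*} (PS : Set (List V)) (f : List V → ℝ) : Prop :=
  ∀ P, Shortest PS f P → ∀ x, P ++ [x] ∈ PS → f P < f (P ++ [x])

/-- semi-order-preserving. -/
def SOP {V : Type*} (PS : Set (List V)) (f : List V → ℝ) : Prop :=
  ∀ (u x : V), ∀ P ∈ PS, ∀ P' ∈ PS, Ends P u → Ends P' u →
    P ++ [x] ∈ PS → P' ++ [x] ∈ PS → f P ≤ f P' → f (P ++ [x]) ≤ f (P' ++ [x])

/-- weak order-preserving. -/
def WOP {V : Type*} (PS : Set (List V)) (f : List V → ℝ) : Prop :=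
  ∀ (u x : V), ∀ P ∈ PS, ∀ P' ∈ PS, Ends P u → Ends P' u →
    P ++ [x] ∈ PS → P' ++ [x] ∈ PS → f P < f P' → f (P ++ [x]) < f (P' ++ [x])

/-- order-preserving. -/
def OP {V : Type*} (PS : Set (List V)) (f : List V → ℝ) : Prop :=
  WOP PS f ∧
  ∀ (u x : V), ∀ P ∈ PS, ∀ P' ∈ PS, Ends P u → Ends P' u →
    P ++ [x] ∈ PS → P' ++ [x] ∈ PS → f P = f P' → f (P ++ [x]) = f (P' ++ [x])

/-- semi-order-preserving in shortest path. -/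
def SOPSP {V : Type*} (PS : Set (List V)) (f : List V → ℝ) : Prop :=
  ∀ (u x : V), ∀ P ∈ PS, ∀ P' ∈ PS, Ends P u → Ends P' u →
    P ++ [x] ∈ PS → P' ++ [x] ∈ PS → f P ≤ f P' → Shortest PS f P →
    f (P ++ [x]) ≤ f (P' ++ [x])

/-- weak order-preserving in shortest path. -/
def WOPSP {V : Type*} (PS : Set (List V)) (f : List V → ℝ) : Prop :=
  ∀ (u x : V), ∀ P ∈ PS, ∀ P' ∈ PS, Ends P u → Ends P' u →
    P ++ [x] ∈ PS → P' ++ [x] ∈ PS → f P < f P' → Shortest PS f P →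
    f (P ++ [x]) < f (P' ++ [x])

/-- order-preserving in shortest path. -/
def OPSP {V : Type*} (PS : Set (List V)) (f : List V → ℝ) : Prop :=
  WOPSP PS f ∧
  ∀ (u x : V), ∀ P ∈ PS, ∀ P' ∈ PS, Ends P u → Ends P' u →
    P ++ [x] ∈ PS → P' ++ [x] ∈ PS → f P = f P' → Shortest PS f P →
    f (P ++ [x]) = f (P' ++ [x])

/-- weak inherited on shortest path: every reachable `v ≠ s` admits a path
all of whose nontrivial prefixes (including itself) are shortest. -/
def WISP {V : Type*} (PS : Set (List V)) (f : List V → ℝ) (s : V) : Prop :=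
  ∀ v, v ≠ s → (∃ P ∈ PS, Ends P v) →
    ∃ P ∈ PS, Ends P v ∧ ∀ Q, Q <+: P → 2 ≤ Q.length → Shortest PS f Q

/-- any path with a repeated vertex decomposes as a path of the system
followed by a circle at its terminal vertex. -/
def CircleDecomposable {V : Type*} (PS : Set (List V)) : Prop :=
  ∀ P ∈ PS, ¬ P.Nodup → ∃ Q C : List V, Q ∈ PS ∧ P = Q ++ C ∧ C ≠ [] ∧
    ∃ v, Ends Q v ∧ Ends C v

theorem stmt6 {V : Type*} [Fintype V] (PS : Set (List V)) (s : V)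
    (f : List V → ℝ) (hs : SourcedAt PS s) (hinsp : INSP PS f)
    (A B : List V) (hB : B ≠ [])
    (hshort : ∀ j, 1 ≤ j → j ≤ B.length → Shortest PS f (A ++ B.take j)) :
    B.Nodup := by
  have key : ∀ j : ℕ, (hj : j < B.length) →
      A ++ B.take (j+1) = (A ++ B.take j) ++ [B.get ⟨j, hj⟩] := by
    intro j hj
    rw [List.append_assoc, List.take_succ]
    simp [List.getElem?_eq_getElem hj]
  have mono : ∀ b a : ℕ, 1 ≤ a → a < b → b ≤ B.length →
      f (A ++ B.take a) < f (A ++ B.take b) := by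
    intro b
    induction b with
    | zero => omega
    | succ c ih =>
      intro a ha hab hb
      have hc : c < B.length := by omega
      have step : f (A ++ B.take c) < f (A ++ B.take (c+1)) := by
        have hsc : Shortest PS f (A ++ B.take c) := hshort c (by omega) (by omega)
        have hmem : (A ++ B.take c) ++ [B.get ⟨c, hc⟩] ∈ PS := by
          rw [← key c hc]; exact (hshort (c+1) (by omega) (by omega)).1
        have := hinsp _ hsc _ hmem
        rwa [← key c hc] at this
      rcases eq_or_lt_of_le (Nat.lt_succ_iff.mp hab) with h | h
      · rw [h]; exact step
      · exact (ih a ha h (le_of_lt hc)).trans step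
  have hlast : ∀ k : Fin B.length,
      (A ++ B.take ((k : ℕ)+1)).getLast? = some (B.get k) := by
    intro k
    rw [key k k.2, List.getLast?_concat]
  have contra : ∀ i j : Fin B.length, (i : ℕ) < (j : ℕ) → B.get i = B.get j → False := by
    intro i j hlt hij
    have hle : f (A ++ B.take ((j : ℕ)+1)) ≤ f (A ++ B.take ((i : ℕ)+1)) := by
      apply (hshort ((j : ℕ)+1) (by omega) (by omega)).2
      · exact (hshort ((i : ℕ)+1) (by omega) (by omega)).1
      · rw [hlast i, hlast j, hij]
    have := mono ((j : ℕ)+1) ((i : ℕ)+1) (by omega) (by omega) (by omega)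
    linarith
  rw [List.nodup_iff_injective_get]
  intro i j hij
  rcases lt_trichotomy (i : ℕ) (j : ℕ) with h | h | h
  · exact absurd (contra i j h hij) (by simp)
  · exact Fin.ext h
  · exact absurd (contra j i h hij.symm) (by simp)
end

section
/- The risk function r satisfies the recursion r(SP) = max{ d_{G\(v_k,v_{k+1})}(s, v_{k+1}), w(v_k, v_{k+1}) + r(P) } for SP = P + (v_k, v_{k+1}), and consequently r is non-decreasing: r(SP) ≥ r(P). -/
/-- total weight of a path (list of vertices). -/
def pathWeight {V : Type*} (w : V → V → ℝ) : List V → ℝ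
  | [] => 0
  | [_] => 0
  | a :: b :: rest => w a b + pathWeight w (b :: rest)

/-- The risk of a path `P = (v_0, ..., v_k)`:
`max { d(P), d(P_i) + D(v_{i-1}, v_i) : 1 ≤ i ≤ k }`, where `d(P_i)` is the
weight of the suffix `(v_i, ..., v_k)` and `D a b` is the detour distance
`d_{G\(a,b)}(s, b)` (the `i = k` term is `d_{G\(v_{k-1},v_k)}(s, v_k)`). -/
noncomputable def risk {V : Type*} (w D : V → V → ℝ) (dflt : V) (P : List V) : ℝ :=
  ((List.range (P.length - 1)).map
    (fun j => pathWeight w (P.drop (j + 1)) + D (P.getD j dflt) (P.getD (j + 1) dflt))).foldr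
    max (pathWeight w P)

lemma foldr_max_map_add (c b : ℝ) (l : List ℝ) :
    (l.map (c + ·)).foldr max (c + b) = c + l.foldr max b := by
  induction l with
  | nil => rfl
  | cons a t ih => simp [ih, max_add_add_left]

lemma foldr_max_pull (t b : ℝ) (l : List ℝ) :
    l.foldr max (max t b) = max t (l.foldr max b) := by
  induction l with
  | nil => rfl
  | cons a tl ih => simp [ih, max_left_comm]

lemma pathWeight_append_single {V : Type*} (w : V → V → ℝ) (x v : V) :
    ∀ (L : List V), L.getLast? = some v →
      pathWeight w (L ++ [x]) = pathWeight w L + w v x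
  | [], h => by simp at h
  | [a], h => by
      simp [List.getLast?] at h
      subst h
      simp [pathWeight]
  | a :: b :: rest, h => by
      have h' : (b :: rest).getLast? = some v := by
        rwa [List.getLast?_cons_cons] at h
      have := pathWeight_append_single w x v (b :: rest) h'
      simp only [List.cons_append, pathWeight] at *
      show w a b + pathWeight w (b :: (rest ++ [x])) = w a b + pathWeight w (b :: rest) + w v x
      rw [this]; ring

lemma getLast?_drop_of_lt {V : Type*} (L : List V) (n : ℕ) (h : n + 1 ≤ L.length) :
    (L.drop n).getLast? = L.getLast? := by
  rw [List.getLast?_eq_getElem?, List.getLast?_eq_getElem?, List.getElem?_drop,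
    List.length_drop]
  congr 1
  omega

lemma getD_eq_of_getLast? {V : Type*} (L : List V) (v d : V) (h : L.getLast? = some v) :
    L.getD (L.length - 1) d = v := by
  rw [List.getD_eq_getElem?_getD, ← List.getLast?_eq_getElem?, h]
  rfl

theorem stmt15 {V : Type*} [Fintype V] (w D : V → V → ℝ)
    (hw : ∀ a b, 0 ≤ w a b) (s : V)
    (P : List V) (vk x : V) (hP : P ≠ []) (hlast : P.getLast? = some vk) :
    risk w D s (P ++ [x]) = max (D vk x) (w vk x + risk w D s P) ∧
    risk w D s P ≤ risk w D s (P ++ [x]) := by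
  have hn : 1 ≤ P.length := List.length_pos_iff.mpr hP
  have key : risk w D s (P ++ [x]) = max (D vk x) (w vk x + risk w D s P) := by
    unfold risk
    have hlen : (P ++ [x]).length - 1 = P.length := by simp
    rw [hlen]
    have hrange : List.range P.length = List.range (P.length - 1) ++ [P.length - 1] := by
      conv_lhs => rw [show P.length = (P.length - 1) + 1 from by omega]
      rw [List.range_succ]
    rw [hrange, List.map_append, List.foldr_append]
    -- last term
    have hlastterm :
        (pathWeight w ((P ++ [x]).drop (P.length - 1 + 1))
          + D ((P ++ [x]).getD (P.length - 1) s) ((P ++ [x]).getD (P.length - 1 + 1) s))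
        = D vk x := by
      have h1 : P.length - 1 + 1 = P.length := by omega
      rw [h1, List.drop_left]
      have h2 : (P ++ [x]).getD (P.length - 1) s = vk := by
        rw [List.getD_append _ _ _ _ (by omega)]
        exact getD_eq_of_getLast? P vk s hlast
      have h3 : (P ++ [x]).getD P.length s = x := by
        rw [List.getD_eq_getElem?_getD, List.getElem?_append_right (le_refl _)]
        simp
      rw [h2, h3]
      simp [pathWeight]
    simp only [List.map_cons, List.map_nil, List.foldr_cons, List.foldr_nil]
    rw [hlastterm]
    -- base
    have hbase : pathWeight w (P ++ [x]) = w vk x + pathWeight w P := by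
      rw [pathWeight_append_single w x vk P hlast]; ring
    rw [hbase]
    -- map congr for j < P.length - 1
    have hmap : (List.range (P.length - 1)).map
        (fun j => pathWeight w ((P ++ [x]).drop (j + 1))
          + D ((P ++ [x]).getD j s) ((P ++ [x]).getD (j + 1) s))
        = ((List.range (P.length - 1)).map
            (fun j => pathWeight w (P.drop (j + 1)) + D (P.getD j s) (P.getD (j + 1) s))).map
          (w vk x + ·) := by
      rw [List.map_map]
      apply List.map_congr_left
      intro j hj
      rw [List.mem_range] at hj
      have hj1 : j + 1 ≤ P.length := by omega
      have hd : (P ++ [x]).drop (j + 1) = P.drop (j + 1) ++ [x] :=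
        List.drop_append_of_le_length hj1
      have hld : (P.drop (j + 1)).getLast? = some vk := by
        rw [getLast?_drop_of_lt P (j + 1) (by omega)]; exact hlast
      have hpw : pathWeight w ((P ++ [x]).drop (j + 1))
          = w vk x + pathWeight w (P.drop (j + 1)) := by
        rw [hd, pathWeight_append_single w x vk _ hld]; ring
      have hg1 : (P ++ [x]).getD j s = P.getD j s :=
        List.getD_append _ _ _ _ (by omega)
      have hg2 : (P ++ [x]).getD (j + 1) s = P.getD (j + 1) s :=
        List.getD_append _ _ _ _ (by omega)
      simp only [Function.comp, hpw, hg1, hg2]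
      ring
    rw [hmap]
    rw [show max (D vk x) (w vk x + pathWeight w P)
        = max (D vk x) (w vk x + pathWeight w P) from rfl]
    rw [max_comm (D vk x) (w vk x + pathWeight w P)]
    rw [max_comm (w vk x + pathWeight w P) (D vk x)]
    rw [foldr_max_pull]
    rw [foldr_max_map_add]
  refine ⟨key, ?_⟩
  rw [key]
  have : risk w D s P ≤ w vk x + risk w D s P := le_add_of_nonneg_left (hw vk x)
  exact this.trans (le_max_right _ _)
end

section
/- The risk function r is semi-order-preserving (SOP): if P, P' are paths from s ending at the same vertex v_k with r(P) ≥ r(P'), and both admit the extension by edge (v_k, v_{k+1}), then r(P + (v_k, v_{k+1})) ≥ r(P' + (v_k, v_{k+1})). -/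
lemma pathWeight_append {V : Type*} (w : V → V → ℝ) (x : V) :
    ∀ (L : List V) (l : V), L.getLast? = some l →
      pathWeight w (L ++ [x]) = pathWeight w L + w l x
  | [], l, h => by simp at h
  | [a], l, h => by
      simp only [List.getLast?_singleton, Option.some.injEq] at h
      subst h; simp [pathWeight]
  | a :: b :: rest, l, h => by
      have h' : (b :: rest).getLast? = some l := by
        rw [List.getLast?_cons_cons] at h; exact h
      have ih := pathWeight_append w x (b :: rest) l h'
      simp only [List.cons_append, List.append_eq, pathWeight] at *
      rw [ih]; ring

lemma foldr_max_shift (c A b : ℝ) : ∀ (l : List ℝ),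
    (l.map (fun t => c + t)).foldr max (max A (c + b)) = max A (c + l.foldr max b)
  | [] => rfl
  | h :: t => by
      simp only [List.map_cons, List.foldr_cons, foldr_max_shift c A b t]
      rw [max_left_comm, ← max_add_add_left]

lemma risk_append {V : Type*} (w D : V → V → ℝ) (s : V) (P : List V) (vk x : V)
    (hP : P ≠ []) (h1 : P.getLast? = some vk) :
    risk w D s (P ++ [x]) = max (D vk x) (w vk x + risk w D s P) := by
  obtain ⟨m, hm⟩ : ∃ m, P.length = m + 1 := by
    cases P with
    | nil => exact absurd rfl hP
    | cons a t => exact ⟨t.length, by simp⟩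
  have hvk : P.getD m s = vk := by
    rw [List.getD_eq_getElem?_getD, ← Nat.add_sub_cancel m 1, ← hm,
      ← List.getLast?_eq_getElem?, h1]; rfl
  unfold risk
  have hlen : (P ++ [x]).length - 1 = m + 1 := by simp [hm]
  rw [hlen, hm, Nat.add_sub_cancel, List.range_succ, List.map_append]
  rw [List.foldr_append]
  -- the appended term j = m
  have hdropm : (P ++ [x]).drop (m + 1) = [x] := by
    rw [List.drop_append, List.drop_of_length_le (by omega),
      hm, Nat.sub_self]
    simp
  have hgetm : (P ++ [x]).getD m s = vk := by
    rw [List.getD_append _ _ _ _ (by omega)]; exact hvk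
  have hgetm1 : (P ++ [x]).getD (m + 1) s = x := by
    rw [List.getD_eq_getElem?_getD, List.getElem?_append_right (by omega), hm]
    simp
  simp only [List.map_cons, List.map_nil, List.foldr_cons, List.foldr_nil,
    hdropm, hgetm, hgetm1]
  have hbase : pathWeight w (P ++ [x]) = pathWeight w P + w vk x := by
    exact pathWeight_append w x P vk h1
  -- rewrite each mapped term for j < m as a shift by w vk x
  have hmap : (List.range m).map
      (fun j => pathWeight w ((P ++ [x]).drop (j + 1))
        + D ((P ++ [x]).getD j s) ((P ++ [x]).getD (j + 1) s))
      = (List.range m).map (fun j => w vk x +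
          (pathWeight w (P.drop (j + 1)) + D (P.getD j s) (P.getD (j + 1) s))) := by
    apply List.map_congr_left
    intro j hj
    rw [List.mem_range] at hj
    have hdrop : (P ++ [x]).drop (j + 1) = P.drop (j + 1) ++ [x] := by
      rw [List.drop_append, Nat.sub_eq_zero_of_le (by omega)]
      rfl
    have hlast : (P.drop (j + 1)).getLast? = some vk := by
      rw [List.getLast?_drop, if_neg (by omega), h1]
    rw [hdrop, pathWeight_append w x _ vk hlast,
      List.getD_append _ _ _ _ (by omega), List.getD_append _ _ _ _ (by omega)]
    ring
  rw [hmap]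
  have key := foldr_max_shift (w vk x) (D vk x) (pathWeight w P)
    ((List.range m).map (fun j => pathWeight w (P.drop (j + 1))
      + D (P.getD j s) (P.getD (j + 1) s)))
  rw [List.map_map] at key
  have hb2 : (pathWeight w [x] + D vk x) ⊔ pathWeight w (P ++ [x])
      = max (D vk x) (w vk x + pathWeight w P) := by
    simp only [pathWeight, hbase, zero_add]
    rw [add_comm (pathWeight w P)]
  rw [hb2]
  exact key

theorem stmt16 {V : Type*} [Fintype V] (w D : V → V → ℝ)
    (hw : ∀ a b, 0 ≤ w a b) (s : V)
    (P P' : List V) (vk x : V) (hP : P ≠ []) (hP' : P' ≠ [])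
    (h1 : P.getLast? = some vk) (h2 : P'.getLast? = some vk)
    (hr : risk w D s P' ≤ risk w D s P) :
    risk w D s (P' ++ [x]) ≤ risk w D s (P ++ [x]) := by
  rw [risk_append w D s P vk x hP h1, risk_append w D s P' vk x hP' h2]
  exact max_le_max le_rfl (by linarith)
end
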